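/- arXiv:2003.13363 — 3 statements merged into one kernel-verified Lean document; each statement's English description precedes it below -/
import Mathlib

section
/- Let θc ∈ (0, π/2), let α : ℝ → ℝ be a locally Lipschitz, strictly increasing function with α(0) = 0 (an extended class-K function), and let ω : ℝ → ℝ³ be Lipschitz continuous. Let R : ℝ → M₃(ℝ) be a differentiable curve with R(t) ∈ SO(3) for all t, satisfying the attitude kinematics Ṙ(t) = R(t)·ω̂(t). Suppose that for all t ≥ 0 the condition −e₃ᵀ R(t) ê₃ ω(t) + α(e₃ᵀ R(t) e₃ − cos θc) ≥ 0 holds. If e₃ᵀ R(0) e₃ ≥ cos θc, then e₃ᵀ R(t) e₃ ≥ cos θc for all t ≥ 0 (i.e., the conic constraint set C_o = {R ∈ SO(3) : e₃ᵀ R e₃ ≥ cos θc} is forward invariant). -/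
open Matrix

/-- The hat map: `hatMap a` is the skew-symmetric matrix with `(hatMap a) *ᵥ b = a ×₃ b`. -/
noncomputable def hatMap (a : Fin 3 → ℝ) : Matrix (Fin 3) (Fin 3) ℝ :=
  !![0, -a 2, a 1; a 2, 0, -a 0; -a 1, a 0, 0]

/-- The third standard basis vector `e₃ = (0,0,1)ᵀ`. -/
def e3 : Fin 3 → ℝ := ![0, 0, 1]

/-- `SO3 R` means `R` is a rotation matrix: `RᵀR = I` and `det R = 1`. -/
def SO3 (R : Matrix (Fin 3) (Fin 3) ℝ) : Prop := Rᵀ * R = 1 ∧ R.det = 1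

/-!
The barrier `h(t) = e₃ᵀ R(t) e₃` has derivative `e₃ᵀ R ω̂ e₃ = -e₃ᵀ R ê₃ ω` (anticommutativity of
the cross product), so the hypothesis says `ḣ ≥ -α(h - cos θc)`. Wherever `h < cos θc` this makes
`ḣ > 0`; hence on the interval after the last time `h ≥ cos θc` the barrier would increase, and it
cannot drop below `cos θc` at all.
-/

open Set

theorem le_of_deriv_pos_of_lt {f : ℝ → ℝ} {a b c : ℝ} (hf : ContinuousOn f (Icc a b))
    (hpos : ∀ x ∈ Ioo a b, f x < c → 0 < deriv f x) (ha : c ≤ f a) (hab : a ≤ b) :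
    c ≤ f b := by
  by_contra! hb
  set S := Icc a b ∩ f ⁻¹' Ici c
  have hS : IsClosed S := hf.preimage_isClosed_of_isClosed isClosed_Icc isClosed_Ici
  have hSbdd : BddAbove S := ⟨b, fun x hx => hx.1.2⟩
  obtain ⟨⟨has, hsb⟩, hcs⟩ : sSup S ∈ S :=
    hS.csSup_mem ⟨a, ⟨le_rfl, hab⟩, ha⟩ hSbdd
  have hsb' : sSup S < b := hsb.lt_of_ne fun h => by rw [h] at hcs; exact hb.not_ge hcs
  have hmono : StrictMonoOn f (Icc (sSup S) b) := by
    refine strictMonoOn_of_deriv_pos (convex_Icc _ _) (hf.mono (Icc_subset_Icc has le_rfl)) ?_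
    rw [interior_Icc]
    rintro x ⟨hsx, hxb⟩
    refine hpos x ⟨has.trans_lt hsx, hxb⟩ (not_le.mp fun hcx => ?_)
    exact hsx.not_ge (le_csSup hSbdd ⟨⟨has.trans hsx.le, hxb.le⟩, hcx⟩)
  exact hb.not_gt (lt_of_le_of_lt hcs (hmono (left_mem_Icc.mpr hsb'.le)
    (right_mem_Icc.mpr hsb'.le) hsb'))

theorem hasDerivAt_dotProduct_mulVec {m n : Type*} [Fintype m] [Fintype n]
    {M : ℝ → Matrix m n ℝ} {M' : Matrix m n ℝ} {t : ℝ} (u : m → ℝ) (v : n → ℝ)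
    (h : ∀ i j, HasDerivAt (fun s => M s i j) (M' i j) t) :
    HasDerivAt (fun s => u ⬝ᵥ M s *ᵥ v) (u ⬝ᵥ M' *ᵥ v) t := by
  simp only [dotProduct, mulVec]
  exact HasDerivAt.fun_sum fun i _ =>
    (HasDerivAt.fun_sum fun j _ => (h i j).mul_const (v j)).const_mul (u i)

theorem hatMap_mulVec (a b : Fin 3 → ℝ) : hatMap a *ᵥ b = a ⨯₃ b := by
  ext i; fin_cases i <;> simp [hatMap, cross_apply, mulVec, dotProduct, Fin.sum_univ_three] <;> ring

theorem dotProduct_mul_hatMap_mulVec (u : Fin 3 → ℝ) (M : Matrix (Fin 3) (Fin 3) ℝ)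
    (a b : Fin 3 → ℝ) : u ⬝ᵥ (M * hatMap a) *ᵥ b = -(u ⬝ᵥ (M * hatMap b) *ᵥ a) := by
  rw [← mulVec_mulVec, ← mulVec_mulVec, hatMap_mulVec, hatMap_mulVec, ← cross_anticomm,
    mulVec_neg, dotProduct_neg]

theorem stmt0_general
    (θc : ℝ)
    (α : ℝ → ℝ) (hα_mono : StrictMono α) (hα0 : α 0 = 0)
    (ω : ℝ → Fin 3 → ℝ)
    (R : ℝ → Matrix (Fin 3) (Fin 3) ℝ)
    (hdyn : ∀ t, ∀ i j, HasDerivAt (fun s => R s i j) ((R t * hatMap (ω t)) i j) t)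
    (hcond : ∀ t ≥ (0 : ℝ),
      -(e3 ⬝ᵥ (R t * hatMap e3) *ᵥ (ω t)) + α (e3 ⬝ᵥ (R t) *ᵥ e3 - Real.cos θc) ≥ 0)
    (hinit : e3 ⬝ᵥ (R 0) *ᵥ e3 ≥ Real.cos θc) :
    ∀ t ≥ (0 : ℝ), e3 ⬝ᵥ (R t) *ᵥ e3 ≥ Real.cos θc := by
  have hderiv : ∀ t, HasDerivAt (fun s => e3 ⬝ᵥ R s *ᵥ e3)
      (-(e3 ⬝ᵥ (R t * hatMap e3) *ᵥ ω t)) t := fun t => by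
    rw [dotProduct_mul_hatMap_mulVec, neg_neg]
    exact hasDerivAt_dotProduct_mulVec e3 e3 (hdyn t)
  intro t ht
  refine le_of_deriv_pos_of_lt (f := fun s => e3 ⬝ᵥ R s *ᵥ e3) (fun x _ => (hderiv x).continuousAt.continuousWithinAt)
    (fun x hx hlt => ?_) hinit ht
  have hα_neg : α (e3 ⬝ᵥ R x *ᵥ e3 - Real.cos θc) < 0 := hα0 ▸ hα_mono (sub_neg.mpr hlt)
  rw [(hderiv x).deriv]
  linarith [hcond x hx.1.le]

/-- Forward invariance of the conic constraint set `{R ∈ SO(3) : e₃ᵀ R e₃ ≥ cos θc}`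
under the ZCBF condition `-e₃ᵀ R ê₃ ω + α(e₃ᵀ R e₃ - cos θc) ≥ 0`. -/
theorem stmt0
    (θc : ℝ) (hθc : θc ∈ Set.Ioo 0 (Real.pi / 2))
    (α : ℝ → ℝ) (hα_lip : LocallyLipschitz α) (hα_mono : StrictMono α) (hα0 : α 0 = 0)
    (ω : ℝ → Fin 3 → ℝ) (hω : ∃ K, LipschitzWith K ω)
    (R : ℝ → Matrix (Fin 3) (Fin 3) ℝ)
    (hSO3 : ∀ t, SO3 (R t))
    (hdyn : ∀ t, ∀ i j, HasDerivAt (fun s => R s i j) ((R t * hatMap (ω t)) i j) t)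
    (hcond : ∀ t ≥ (0 : ℝ),
      -(e3 ⬝ᵥ (R t * hatMap e3) *ᵥ (ω t)) + α (e3 ⬝ᵥ (R t) *ᵥ e3 - Real.cos θc) ≥ 0)
    (hinit : e3 ⬝ᵥ (R 0) *ᵥ e3 ≥ Real.cos θc) :
    ∀ t ≥ (0 : ℝ), e3 ⬝ᵥ (R t) *ᵥ e3 ≥ Real.cos θc :=
  stmt0_general θc α hα_mono hα0 ω R hdyn hcond hinit
end

section
/- Consider n rigid bodies on a sphere of radius ρ > 0, with differentiable attitude curves Rᵢ : ℝ → M₃(ℝ), Rᵢ(t) ∈ SO(3), satisfying Ṙᵢ(t) = Rᵢ(t)·ω̂ᵢ(t) for Lipschitz continuous ωᵢ : ℝ → ℝ³. Let 0 < D_c < D_a < ρπ/2 and k > 0. Write R_{ij}(t) = Rᵢ(t)ᵀ Rⱼ(t) for the relative attitude. Suppose that for every t ≥ 0 and every pair i ≠ j with e₃ᵀ R_{ij}(t) e₃ ≥ cos(D_a/ρ) (i.e., j is a distance neighbor of i), the distributed condition e₃ᵀ R_{ij}(t)ᵀ ê₃ ωᵢ(t) ≥ k·(e₃ᵀ R_{ij}(t)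 e₃ − cos(D_c/ρ)) holds. If at time 0 no collisions occur, i.e., e₃ᵀ R_{ij}(0) e₃ ≤ cos(D_c/ρ) for all i ≠ j, then for all t ≥ 0 and all i ≠ j one has e₃ᵀ R_{ij}(t) e₃ ≤ cos(D_c/ρ); equivalently, the geodesic distance ρ·arccos(e₃ᵀ R_{ij}(t) e₃) between every pair of bodies remains at least D_c for all t ≥ 0 (the safe set C is forward invariant). -/
open Matrix

/-!
The cosine `e₃ᵀ Rᵢᵀ Rⱼ e₃` of the angular distance between bodies `i` and `j` evolves, by the
attitude kinematics, with rate minus the sum of the two conic CBF terms `e₃ᵀ Rᵢⱼᵀ ê₃ ωᵢ` and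
`e₃ᵀ Rⱼᵢᵀ ê₃ ωⱼ`. While the pair is unsafe the cosine exceeds `cos (D_c/ρ) ≥ cos (D_a/ρ)`, so each
body sees the other as a neighbour, both CBF conditions apply and the rate is at most
`-2k (cos - cos (D_c/ρ)) ≤ 0`. A fencing argument then keeps the cosine below `cos (D_c/ρ)`, and
`arccos` being antitone turns this into the bound on the geodesic distance.
-/

theorem image_le_of_deriv_nonpos_above {f f' : ℝ → ℝ} {a c : ℝ}
    (hf : ∀ x ∈ Set.Ici a, HasDerivAt f (f' x) x) (ha : f a ≤ c)
    (hf' : ∀ x ∈ Set.Ici a, c < f x → f' x ≤ 0) {t : ℝ} (ht : a ≤ t) : f t ≤ c := by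
  -- `f` can touch the barrier `c + ε (x - a + 1)` only above `c`, where it does not increase.
  refine le_of_forall_pos_le_add fun δ hδ => ?_
  have hlen : 0 < t - a + 1 := by linarith
  set ε := δ / (t - a + 1)
  have hε : 0 < ε := div_pos hδ hlen
  have hfence := image_le_of_deriv_right_lt_deriv_boundary' (a := a) (b := t)
    (B := fun x => c + ε * (x - a + 1)) (B' := fun _ => ε)
    (HasDerivAt.continuousOn fun x hx => hf x hx.1)
    (fun x hx => (hf x hx.1).hasDerivWithinAt) (by nlinarith) (by fun_prop)
    (fun x _ => ((((hasDerivAt_id x).sub_const a).add_const 1).const_mul ε).const_add c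
      |>.hasDerivWithinAt |>.congr_deriv (by simp))
    (fun x hx hfx => (hf' x hx.1 (by rw [hfx]; nlinarith [hx.1])).trans_lt hε)
    (Set.right_mem_Icc.2 ht)
  simpa [ε, div_mul_cancel₀ _ hlen.ne'] using hfence

theorem hasDerivAt_dotProduct_transpose_mul_mulVec {k l m : Type*}
    [Fintype k] [Fintype l] [Fintype m]
    {A : ℝ → Matrix k l ℝ} {B : ℝ → Matrix k m ℝ} {A' : Matrix k l ℝ} {B' : Matrix k m ℝ} {t : ℝ}
    (hA : ∀ a b, HasDerivAt (fun s => A s a b) (A' a b) t)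
    (hB : ∀ a b, HasDerivAt (fun s => B s a b) (B' a b) t) (v : l → ℝ) (w : m → ℝ) :
    HasDerivAt (fun s => v ⬝ᵥ ((A s)ᵀ * B s) *ᵥ w) (v ⬝ᵥ (A'ᵀ * B t + (A t)ᵀ * B') *ᵥ w) t := by
  have hexp : (fun s => v ⬝ᵥ ((A s)ᵀ * B s) *ᵥ w) =
      fun s => ∑ a, v a * ∑ b, (∑ c, A s c a * B s c b) * w b := by
    ext s; simp [dotProduct, mulVec, mul_apply]
  have h : HasDerivAt (fun s => ∑ a, v a * ∑ b, (∑ c, A s c a * B s c b) * w b)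
      (∑ a, v a * ∑ b, (∑ c, (A' c a * B t c b + A t c a * B' c b)) * w b) t :=
    HasDerivAt.fun_sum fun a _ => (HasDerivAt.fun_sum fun b _ =>
      (HasDerivAt.fun_sum fun c _ => (hA c a).mul (hB c b)).mul_const (w b)).const_mul (v a)
  rw [hexp]
  convert h using 1
  simp [dotProduct, mulVec, mul_apply, Finset.sum_add_distrib]

theorem dotProduct_relAttitude_rate_mulVec_self (A B : Matrix (Fin 3) (Fin 3) ℝ)
    (a b v : Fin 3 → ℝ) :
    v ⬝ᵥ ((A * hatMap a)ᵀ * B + Aᵀ * (B * hatMap b)) *ᵥ v =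
      -(v ⬝ᵥ ((Aᵀ * B)ᵀ * hatMap v) *ᵥ a) - v ⬝ᵥ ((Bᵀ * A)ᵀ * hatMap v) *ᵥ b := by
  -- `hatMap a` is skew and `hatMap a *ᵥ v = -(hatMap v *ᵥ a)`; entrywise this is a ring identity.
  simp only [dotProduct, mulVec, hatMap, transpose_mul, Matrix.add_apply, mul_apply,
    transpose_apply, of_apply, cons_val', cons_val_fin_one, Fin.sum_univ_three, cons_val_zero,
    cons_val_one, cons_val, transpose_transpose]
  ring

theorem hasDerivAt_relAttitude_of_body_rates {A B : ℝ → Matrix (Fin 3) (Fin 3) ℝ}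
    {a b : Fin 3 → ℝ} {t : ℝ}
    (hA : ∀ i j, HasDerivAt (fun s => A s i j) ((A t * hatMap a) i j) t)
    (hB : ∀ i j, HasDerivAt (fun s => B s i j) ((B t * hatMap b) i j) t) (v : Fin 3 → ℝ) :
    HasDerivAt (fun s => v ⬝ᵥ ((A s)ᵀ * B s) *ᵥ v)
      (-(v ⬝ᵥ (((A t)ᵀ * B t)ᵀ * hatMap v) *ᵥ a) - v ⬝ᵥ (((B t)ᵀ * A t)ᵀ * hatMap v) *ᵥ b) t :=
  dotProduct_relAttitude_rate_mulVec_self (A t) (B t) a b v ▸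
    hasDerivAt_dotProduct_transpose_mul_mulVec hA hB v v

theorem dotProduct_transpose_mulVec_self {m R : Type*} [Fintype m] [CommSemiring R]
    (M : Matrix m m R) (v : m → R) :
    v ⬝ᵥ Mᵀ *ᵥ v = v ⬝ᵥ M *ᵥ v := by
  rw [dotProduct_mulVec, vecMul_transpose, dotProduct_comm]

theorem le_mul_arccos_of_le_cos {ρ d x : ℝ} (hρ : 0 < ρ) (hd : 0 ≤ d) (hdπ : d ≤ ρ * Real.pi)
    (hx : x ≤ Real.cos (d / ρ)) : d ≤ ρ * Real.arccos x := by
  have h := Real.arccos_le_arccos hx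
  rw [Real.arccos_cos (by positivity) (by rwa [div_le_iff₀' hρ])] at h
  rwa [div_le_iff₀' hρ] at h

theorem stmt2_general
    (n : ℕ) (ρ Dc Da k : ℝ)
    (hρ : 0 < ρ) (hDc : 0 < Dc) (hDcDa : Dc < Da) (hDa : Da < ρ * Real.pi / 2) (hk : 0 < k)
    (R : Fin n → ℝ → Matrix (Fin 3) (Fin 3) ℝ) (ω : Fin n → ℝ → Fin 3 → ℝ)
    (hdyn : ∀ i t, ∀ a b, HasDerivAt (fun s => R i s a b) ((R i t * hatMap (ω i t)) a b) t)
    (hcond : ∀ t ≥ (0 : ℝ), ∀ i j, i ≠ j →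
      e3 ⬝ᵥ ((R i t)ᵀ * R j t) *ᵥ e3 ≥ Real.cos (Da / ρ) →
      e3 ⬝ᵥ (((R i t)ᵀ * R j t)ᵀ * hatMap e3) *ᵥ (ω i t) ≥
        k * (e3 ⬝ᵥ ((R i t)ᵀ * R j t) *ᵥ e3 - Real.cos (Dc / ρ)))
    (hinit : ∀ i j, i ≠ j → e3 ⬝ᵥ ((R i 0)ᵀ * R j 0) *ᵥ e3 ≤ Real.cos (Dc / ρ)) :
    (∀ t ≥ (0 : ℝ), ∀ i j, i ≠ j →
      e3 ⬝ᵥ ((R i t)ᵀ * R j t) *ᵥ e3 ≤ Real.cos (Dc / ρ)) ∧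
    (∀ t ≥ (0 : ℝ), ∀ i j, i ≠ j →
      ρ * Real.arccos (e3 ⬝ᵥ ((R i t)ᵀ * R j t) *ᵥ e3) ≥ Dc) := by
  have hDaπ : Da ≤ ρ * Real.pi := by nlinarith [Real.pi_pos]
  have hcos : Real.cos (Da / ρ) ≤ Real.cos (Dc / ρ) :=
    Real.cos_le_cos_of_nonneg_of_le_pi (by positivity) (by rwa [div_le_iff₀' hρ])
      (by gcongr)
  have hsafe : ∀ t ≥ (0 : ℝ), ∀ i j, i ≠ j →
      e3 ⬝ᵥ ((R i t)ᵀ * R j t) *ᵥ e3 ≤ Real.cos (Dc / ρ) := by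
    intro t ht i j hij
    refine image_le_of_deriv_nonpos_above (fun x _ => hasDerivAt_relAttitude_of_body_rates
      (hdyn i x) (hdyn j x) e3) (hinit i j hij) (fun x hx hunsafe => ?_) ht
    have hswap : e3 ⬝ᵥ ((R j x)ᵀ * R i x) *ᵥ e3 = e3 ⬝ᵥ ((R i x)ᵀ * R j x) *ᵥ e3 := by
      rw [← dotProduct_transpose_mulVec_self, transpose_mul, transpose_transpose]
    have hi := hcond x hx i j hij (hcos.trans hunsafe.le)
    have hj := hcond x hx j i hij.symm (hswap ▸ hcos.trans hunsafe.le)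
    rw [hswap] at hj
    have hbarrier := mul_nonneg hk.le (sub_nonneg.2 hunsafe.le)
    linarith
  exact ⟨hsafe, fun t ht i j hij =>
    le_mul_arccos_of_le_cos hρ hDc.le (by linarith) (hsafe t ht i j hij)⟩

/-- Distributed collision avoidance on a sphere: under the distributed conic CBF condition
for all distance-neighbor pairs, the safe set
`C = {(R₁,…,Rₙ) : e₃ᵀ (RᵢᵀRⱼ) e₃ ≤ cos(D_c/ρ) for all i ≠ j}` is forward invariant,
i.e. the geodesic distance `ρ·arccos(e₃ᵀ(RᵢᵀRⱼ)e₃)` stays at least `D_c`. -/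
theorem stmt2
    (n : ℕ) (ρ Dc Da k : ℝ)
    (hρ : 0 < ρ) (hDc : 0 < Dc) (hDcDa : Dc < Da) (hDa : Da < ρ * Real.pi / 2) (hk : 0 < k)
    (R : Fin n → ℝ → Matrix (Fin 3) (Fin 3) ℝ) (ω : Fin n → ℝ → Fin 3 → ℝ)
    (hSO3 : ∀ i t, SO3 (R i t))
    (hω : ∀ i, ∃ K, LipschitzWith K (ω i))
    (hdyn : ∀ i t, ∀ a b, HasDerivAt (fun s => R i s a b) ((R i t * hatMap (ω i t)) a b) t)
    (hcond : ∀ t ≥ (0 : ℝ), ∀ i j, i ≠ j →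
      e3 ⬝ᵥ ((R i t)ᵀ * R j t) *ᵥ e3 ≥ Real.cos (Da / ρ) →
      e3 ⬝ᵥ (((R i t)ᵀ * R j t)ᵀ * hatMap e3) *ᵥ (ω i t) ≥
        k * (e3 ⬝ᵥ ((R i t)ᵀ * R j t) *ᵥ e3 - Real.cos (Dc / ρ)))
    (hinit : ∀ i j, i ≠ j → e3 ⬝ᵥ ((R i 0)ᵀ * R j 0) *ᵥ e3 ≤ Real.cos (Dc / ρ)) :
    (∀ t ≥ (0 : ℝ), ∀ i j, i ≠ j →
      e3 ⬝ᵥ ((R i t)ᵀ * R j t) *ᵥ e3 ≤ Real.cos (Dc / ρ)) ∧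
    (∀ t ≥ (0 : ℝ), ∀ i j, i ≠ j →
      ρ * Real.arccos (e3 ⬝ᵥ ((R i t)ᵀ * R j t) *ᵥ e3) ≥ Dc) :=
  stmt2_general n ρ Dc Da k hρ hDc hDcDa hDa hk R ω hdyn hcond hinit
end

section
/- Let α : ℝ → ℝ be a locally Lipschitz, strictly increasing function with α(0) = 0, and let h : ℝ → ℝ be differentiable with h'(t) ≥ −α(h(t)) for all t ≥ 0. If h(0) ≥ 0 then h(t) ≥ 0 for all t ≥ 0. -/
/-!
Wherever `h < 0`, monotonicity of `α` and `α 0 = 0` give `h' ≥ -α (h) > 0`, so `h` cannot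
decrease while it is negative. If `h t < 0`, then on the interval from the last point of `[0, t]`
where `h ≥ 0` up to `t` the function `h` is negative, hence monotone, so `h t ≥ 0` after all.
-/

open Set

theorem exists_nonneg_and_neg_on_Ioc {f : ℝ → ℝ} {a b : ℝ} (hf : ContinuousOn f (Icc a b))
    (hab : a ≤ b) (ha : 0 ≤ f a) (hb : f b < 0) :
    ∃ s ∈ Ico a b, 0 ≤ f s ∧ ∀ u ∈ Ioc s b, f u < 0 := by
  set S : Set ℝ := Icc a b ∩ f ⁻¹' Ici 0
  have hS_closed : IsClosed S := hf.preimage_isClosed_of_isClosed isClosed_Icc isClosed_Ici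
  have hS_bdd : BddAbove S := ⟨b, fun u hu => hu.1.2⟩
  have hs : sSup S ∈ S := hS_closed.csSup_mem ⟨a, ⟨left_mem_Icc.2 hab, ha⟩⟩ hS_bdd
  have hsb : sSup S ≠ b := fun h => (h ▸ hs.2 : 0 ≤ f b).not_gt hb
  refine ⟨sSup S, ⟨hs.1.1, lt_of_le_of_ne hs.1.2 hsb⟩, hs.2, fun u hu => ?_⟩
  by_contra! hfu
  exact (le_csSup hS_bdd ⟨⟨hs.1.1.trans hu.1.le, hu.2⟩, hfu⟩).not_gt hu.1

theorem nonneg_of_deriv_nonneg_of_neg {f : ℝ → ℝ} {a b : ℝ} (hf : ContinuousOn f (Icc a b))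
    (hf' : DifferentiableOn ℝ f (Ioo a b)) (hab : a ≤ b) (ha : 0 ≤ f a)
    (hderiv : ∀ x ∈ Ioo a b, f x < 0 → 0 ≤ deriv f x) : 0 ≤ f b := by
  by_contra! hb
  obtain ⟨s, ⟨has, hsb⟩, hfs, hneg⟩ := exists_nonneg_and_neg_on_Ioc hf hab ha hb
  have hsub : Ioo s b ⊆ Ioo a b := Ioo_subset_Ioo_left has
  have hmono : MonotoneOn f (Icc s b) := by
    refine monotoneOn_of_deriv_nonneg (convex_Icc s b)
      (hf.mono (Icc_subset_Icc_left has)) ?_ ?_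
    · rw [interior_Icc]; exact hf'.mono hsub
    · rw [interior_Icc]
      exact fun x hx => hderiv x (hsub hx) (hneg x (Ioo_subset_Ioc_self hx))
  exact hb.not_ge (hfs.trans (hmono (left_mem_Icc.2 hsb.le) (right_mem_Icc.2 hsb.le) hsb.le))

theorem stmt3_general
    (α : ℝ → ℝ) (hα_mono : StrictMono α) (hα0 : α 0 = 0)
    (h : ℝ → ℝ) (hdiff : Differentiable ℝ h)
    (hineq : ∀ t ≥ (0 : ℝ), deriv h t ≥ -α (h t))
    (h0 : h 0 ≥ 0) :
    ∀ t ≥ (0 : ℝ), h t ≥ 0 := by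
  intro t ht
  refine nonneg_of_deriv_nonneg_of_neg hdiff.continuous.continuousOn
    hdiff.differentiableOn ht h0 fun x hx hneg => ?_
  have hαneg : α (h x) < 0 := hα0 ▸ hα_mono hneg
  linarith [hineq x hx.1.le]

/-- Comparison lemma for zeroing control barrier functions: if `h` is differentiable with
`h'(t) ≥ -α(h(t))` for all `t ≥ 0`, where `α` is a locally Lipschitz, strictly increasing
function with `α(0) = 0`, and `h(0) ≥ 0`, then `h(t) ≥ 0` for all `t ≥ 0`. -/
theorem stmt3
    (α : ℝ → ℝ) (hα_lip : LocallyLipschitz α) (hα_mono : StrictMono α) (hα0 : α 0 = 0)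
    (h : ℝ → ℝ) (hdiff : Differentiable ℝ h)
    (hineq : ∀ t ≥ (0 : ℝ), deriv h t ≥ -α (h t))
    (h0 : h 0 ≥ 0) :
    ∀ t ≥ (0 : ℝ), h t ≥ 0 :=
  stmt3_general α hα_mono hα0 h hdiff hineq h0
end
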